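/- The degenerate Stirling numbers of the second kind satisfy the recurrence S_{2,λ}(n+1, k) = k S_{2,λ}(n, k) + S_{2,λ}(n, k−1) − nλ S_{2,λ}(n, k) for 1 ≤ k ≤ n. -/

import Mathlib

open Real Filter Finset

/-- λ-falling factorial (x)_{n,λ} = x(x-λ)⋯(x-(n-1)λ). -/
noncomputable def dfall (lam x : ℝ) (n : ℕ) : ℝ := ∏ j ∈ Finset.range n, (x - j * lam)

/-- degenerate exponential e_λ(t) = (1+λt)^{1/λ}. -/
noncomputable def dexp (lam t : ℝ) : ℝ := (1 + lam * t) ^ (1 / lam)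

/-- Degenerate Stirling numbers of the second kind, via coefficients of (1/k!)(e_λ(t)-1)^k. -/
noncomputable def degStirling (lam : ℝ) (n k : ℕ) : ℝ :=
  (Nat.factorial n : ℝ) / (Nat.factorial k : ℝ) *
    PowerSeries.coeff (R := ℝ) n ((PowerSeries.mk (fun m => dfall lam 1 m / (Nat.factorial m : ℝ)) - 1) ^ k)

/-!
Since `(1)_{n+1,λ} = (1)_{n,λ} (1 - nλ)`, the series `e_λ(t)` satisfies `(1 + λt) e_λ' = e_λ`.
For `F_k = (e_λ - 1)^k / k!` this gives `(1 + λt) F_k' = e_λ F_{k-1} = k F_k + F_{k-1}`,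
and comparing coefficients of `t^n / n!` on both sides is the recurrence.
-/

open PowerSeries

noncomputable def degExpSeries (lam : ℝ) : ℝ⟦X⟧ :=
  PowerSeries.mk fun m => dfall lam 1 m / (Nat.factorial m : ℝ)

lemma degStirling_eq (lam : ℝ) (n k : ℕ) :
    degStirling lam n k = n.factorial / k.factorial * coeff n ((degExpSeries lam - 1) ^ k) :=
  rfl

lemma dfall_succ (lam x : ℝ) (n : ℕ) : dfall lam x (n + 1) = dfall lam x n * (x - n * lam) :=
  Finset.prod_range_succ _ _

lemma coeff_one_add_C_mul_X_mul_derivative {R : Type*} [CommSemiring R] (a : R) (f : R⟦X⟧)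
    (n : ℕ) :
    coeff n ((1 + C a * X) * d⁄dX R f) = (n + 1) * coeff (n + 1) f + a * n * coeff n f := by
  rw [add_mul, one_mul, map_add, mul_comm (C a) X, mul_assoc, coeff_derivative]
  cases n with
  | zero => simp
  | succ n =>
    rw [coeff_succ_X_mul, coeff_C_mul, coeff_derivative]
    push_cast
    ring

lemma one_add_C_mul_X_mul_derivative_degExpSeries (lam : ℝ) :
    (1 + C lam * X) * d⁄dX ℝ (degExpSeries lam) = degExpSeries lam := by
  ext n
  rw [coeff_one_add_C_mul_X_mul_derivative, degExpSeries, coeff_mk, coeff_mk, dfall_succ,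
    Nat.factorial_succ]
  push_cast
  field_simp
  ring

lemma mul_derivation_sub_one_pow_succ {R A : Type*} [CommSemiring R] [CommRing A] [Algebra R A]
    (D : Derivation R A A) {u f : A} (hf : u * D f = f) (k : ℕ) :
    u * D ((f - 1) ^ (k + 1)) = (k + 1) * ((f - 1) ^ (k + 1) + (f - 1) ^ k) := by
  rw [D.leibniz_pow, map_sub, D.map_one_eq_zero, sub_zero, Nat.add_sub_cancel, nsmul_eq_mul,
    smul_eq_mul, mul_left_comm u, mul_left_comm u, hf]
  push_cast
  ring

lemma coeff_degExpSeries_sub_one_pow_succ (lam : ℝ) (n k : ℕ) :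
    (n + 1) * coeff (n + 1) ((degExpSeries lam - 1) ^ (k + 1))
        + lam * n * coeff n ((degExpSeries lam - 1) ^ (k + 1))
      = (k + 1) * (coeff n ((degExpSeries lam - 1) ^ (k + 1))
        + coeff n ((degExpSeries lam - 1) ^ k)) := by
  have h := congrArg (coeff n) (mul_derivation_sub_one_pow_succ (d⁄dX ℝ)
    (one_add_C_mul_X_mul_derivative_degExpSeries lam) k)
  rw [coeff_one_add_C_mul_X_mul_derivative] at h
  rw [h, ← map_natCast (C (R := ℝ)), ← map_one (C (R := ℝ)), ← map_add, coeff_C_mul,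
    map_add]

theorem stmt9_general (lam : ℝ) (n k : ℕ) (hk : 1 ≤ k) :
    degStirling lam (n + 1) k
      = k * degStirling lam n k + degStirling lam n (k - 1)
        - n * lam * degStirling lam n k := by
  obtain ⟨k, rfl⟩ := Nat.exists_eq_add_of_le' hk
  have key := coeff_degExpSeries_sub_one_pow_succ lam n k
  simp only [degStirling_eq, Nat.add_sub_cancel]
  rw [Nat.factorial_succ n, Nat.factorial_succ k]
  push_cast
  field_simp
  linear_combination key

theorem stmt9 (lam : ℝ) (n k : ℕ) (hk : 1 ≤ k) (hkn : k ≤ n) :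
    degStirling lam (n + 1) k
      = k * degStirling lam n k + degStirling lam n (k - 1)
        - n * lam * degStirling lam n k :=
  stmt9_general lam n k hk
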